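/- arXiv:math/0108112 — 6 statements merged into one kernel-verified Lean document; each statement's English description precedes it below -/
import Mathlib

section
/- The Hecke matrix S satisfies the Hecke condition S² = ω·S + I_{n²}. -/
open Matrix Kronecker

/-- The Hecke matrix `S = q·Σᵢ E_{ii}⊗E_{ii} + Σ_{i≠j} E_{ij}⊗E_{ji} + (q−q⁻¹)·Σ_{i<j} E_{ii}⊗E_{jj}`
in `M_{n²}(K)` (Kronecker identification). -/
noncomputable def heckeS (K : Type*) [Field K] (n : ℕ) (q : K) :
    Matrix (Fin n × Fin n) (Fin n × Fin n) K :=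
  q • (∑ i : Fin n, Matrix.single i i (1 : K) ⊗ₖ Matrix.single i i (1 : K))
    + ∑ i : Fin n, ∑ j : Fin n,
        (if i ≠ j then Matrix.single i j (1 : K) ⊗ₖ Matrix.single j i (1 : K) else 0)
    + (q - q⁻¹) • ∑ i : Fin n, ∑ j : Fin n,
        (if i < j then Matrix.single i i (1 : K) ⊗ₖ Matrix.single j j (1 : K) else 0)

/-!
In the basis `e_a ⊗ e_b`, `S = D + T` with `D` diagonal (coefficient `q` at `a = b`, `ω` at
`a < b`, `0` at `a > b`) and `T` the flip `e_a ⊗ e_b ↦ e_b ⊗ e_a` restricted to `a ≠ b`.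
Then `T²` is the projection onto the pairs `a ≠ b`, `DT + TD = ωT` because the coefficients of
`(a, b)` and `(b, a)` add up to `ω`, and `D² + T² = ωD + 1` comes down to `q² = ωq + 1` on the
diagonal pairs. Equivalently, on each plane spanned by `e_a ⊗ e_b` and `e_b ⊗ e_a` with `a < b`,
`S` acts by `[[ω, 1], [1, 0]]`, whose characteristic polynomial is `x² - ωx - 1`.
-/

section OffDiagFlip

variable {K ι : Type*} [Semiring K] [DecidableEq ι]

def offDiagFlip : Matrix (ι × ι) (ι × ι) K :=
  of fun p r => if p.1 ≠ p.2 ∧ r = p.swap then 1 else 0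

variable [Fintype ι]

lemma sum_ite_single_kronecker_single_eq_diagonal (c : ι → ι → Prop) [DecidableRel c] :
    ∑ i, ∑ j, (if c i j then single i i (1 : K) ⊗ₖ single j j (1 : K) else 0) =
      diagonal fun p => if c p.1 p.2 then 1 else 0 := by
  ext p r
  simp only [single_kronecker_single, Matrix.sum_apply, ← Fintype.sum_prod_type',
    apply_ite (fun M : Matrix (ι × ι) (ι × ι) K => M p r)]
  rw [Finset.sum_eq_single p (fun x _ hx => by simp [hx]) (by simp)]
  by_cases h : p = r <;> simp [h]

lemma sum_ite_single_kronecker_single_swap_eq_offDiagFlip :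
    ∑ i : ι, ∑ j, (if i ≠ j then single i j (1 : K) ⊗ₖ single j i (1 : K) else 0) =
      offDiagFlip := by
  ext p r
  simp only [single_kronecker_single, Matrix.sum_apply, ← Fintype.sum_prod_type',
    apply_ite (fun M : Matrix (ι × ι) (ι × ι) K => M p r)]
  rw [Finset.sum_eq_single p (fun x _ hx => by simp [hx]) (by simp)]
  simp [offDiagFlip, single_apply, eq_comm, ite_and, Prod.swap]

lemma offDiagFlip_mul_self :
    (offDiagFlip : Matrix (ι × ι) (ι × ι) K) * offDiagFlip =
      diagonal fun p => if p.1 = p.2 then 0 else 1 := by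
  ext p r
  rw [mul_apply, Finset.sum_eq_single p.swap (fun s _ hs => by simp [offDiagFlip, hs]) (by simp)]
  by_cases hp : p.1 = p.2
  · simp [offDiagFlip, diagonal_apply, hp]
  · rcases eq_or_ne p r with rfl | hr
    · simp [offDiagFlip, hp, Ne.symm hp]
    · simp [offDiagFlip, hp, hr, eq_comm]

end OffDiagFlip

section HeckeDiagCoeff

variable {K ι : Type*} [Field K] [LinearOrder ι]

def heckeDiagCoeff (q : K) (p : ι × ι) : K :=
  if p.1 = p.2 then q else if p.1 < p.2 then q - q⁻¹ else 0

lemma heckeDiagCoeff_mul_self_add {q : K} (hq : q ≠ 0) (p : ι × ι) :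
    heckeDiagCoeff q p * heckeDiagCoeff q p + (if p.1 = p.2 then 0 else 1) =
      (q - q⁻¹) * heckeDiagCoeff q p + 1 := by
  unfold heckeDiagCoeff
  split_ifs
  · field_simp
    ring
  · ring
  · ring

variable [Fintype ι]

lemma diagonal_heckeDiagCoeff_mul_self_add_offDiagFlip_mul_self {q : K} (hq : q ≠ 0) :
    diagonal (heckeDiagCoeff q) * diagonal (heckeDiagCoeff q) +
        (offDiagFlip : Matrix (ι × ι) (ι × ι) K) * offDiagFlip =
      (q - q⁻¹) • diagonal (heckeDiagCoeff q) + 1 := by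
  rw [offDiagFlip_mul_self, diagonal_mul_diagonal, diagonal_add, ← diagonal_smul,
    ← diagonal_one, diagonal_add]
  exact congrArg diagonal (funext (heckeDiagCoeff_mul_self_add hq))

lemma diagonal_heckeDiagCoeff_mul_offDiagFlip_add_offDiagFlip_mul (q : K) :
    diagonal (heckeDiagCoeff q) * offDiagFlip + offDiagFlip * diagonal (heckeDiagCoeff q) =
      (q - q⁻¹) • (offDiagFlip : Matrix (ι × ι) (ι × ι) K) := by
  ext p r
  simp only [Matrix.add_apply, diagonal_mul, mul_diagonal, Matrix.smul_apply, offDiagFlip,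
    of_apply]
  split_ifs with h
  · obtain ⟨hp, rfl⟩ := h
    rcases lt_or_gt_of_ne hp with hp | hp <;>
      simp [heckeDiagCoeff, hp, hp.ne, hp.ne', not_lt_of_gt hp]
  · simp

end HeckeDiagCoeff

lemma heckeS_eq_diagonal_add_offDiagFlip {K : Type*} [Field K] (n : ℕ) (q : K) :
    heckeS K n q = diagonal (heckeDiagCoeff q) + offDiagFlip := by
  have h_diag : ∑ i : Fin n, single i i (1 : K) ⊗ₖ single i i (1 : K) =
      ∑ i, ∑ j, (if i = j then single i i (1 : K) ⊗ₖ single j j (1 : K) else 0) := by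
    simp
  rw [heckeS, h_diag, sum_ite_single_kronecker_single_eq_diagonal,
    sum_ite_single_kronecker_single_eq_diagonal,
    sum_ite_single_kronecker_single_swap_eq_offDiagFlip, ← diagonal_smul, ← diagonal_smul,
    add_right_comm, diagonal_add]
  congr 2
  ext p
  simp only [heckeDiagCoeff, Pi.smul_apply, smul_eq_mul]
  split_ifs <;> simp_all

theorem hecke_condition_general (K : Type*) [Field K] (n : ℕ) (q : K) (hq : q ≠ 0) :
    heckeS K n q * heckeS K n q = (q - q⁻¹) • heckeS K n q + 1 := by
  set D := diagonal (heckeDiagCoeff (ι := Fin n) q)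
  set T : Matrix (Fin n × Fin n) (Fin n × Fin n) K := offDiagFlip
  calc heckeS K n q * heckeS K n q = (D * D + T * T) + (D * T + T * D) := by
        rw [heckeS_eq_diagonal_add_offDiagFlip]
        noncomm_ring
    _ = (q - q⁻¹) • heckeS K n q + 1 := by
        rw [diagonal_heckeDiagCoeff_mul_self_add_offDiagFlip_mul_self hq,
          diagonal_heckeDiagCoeff_mul_offDiagFlip_add_offDiagFlip_mul,
          heckeS_eq_diagonal_add_offDiagFlip, smul_add]
        abel

/-- The Hecke matrix satisfies the Hecke condition `S² = (q − q⁻¹)·S + I`. -/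
theorem hecke_condition (K : Type*) [Field K] (n : ℕ) (hn : 1 ≤ n) (q : K) (hq : q ≠ 0) :
    heckeS K n q * heckeS K n q = (q - q⁻¹) • heckeS K n q + 1 :=
  hecke_condition_general K n q hq
end

section
/- Assume 1 + q² ≠ 0 in K. The linear operator τ on Kⁿ⊗Kⁿ defined on the standard basis by τ(eᵢ⊗eⱼ) = sgn(j−i)·((1−q²)/(1+q²))·eᵢ⊗eⱼ + (2q/(1+q²))·eⱼ⊗eᵢ for i ≠ j, and τ(eᵢ⊗eᵢ) = eᵢ⊗eᵢ, is an involution: τ∘τ = id. -/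
/-!
On the plane spanned by `eᵢ⊗eⱼ` and `eⱼ⊗eᵢ` (`i ≠ j`), `τ` acts by the reflection matrix
`!![±a, b; b, ∓a]` with `a = (1 - q²)/(1 + q²)`, `b = 2q/(1 + q²)`, and `a² + b² = 1` because
`(a, b)` is the rational parametrization of the unit circle; such a matrix squares to the identity.
-/

open Matrix

/-- The matrix of the permutation `τ = τ_{V⊗V}` on `Kⁿ⊗Kⁿ` in the standard basis:
`τ(eᵢ⊗eⱼ) = sgn(j−i)·((1−q²)/(1+q²))·eᵢ⊗eⱼ + (2q/(1+q²))·eⱼ⊗eᵢ` for `i ≠ j`, and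
`τ(eᵢ⊗eᵢ) = eᵢ⊗eᵢ`.  The entry `tauVV (k,l) (i,j)` is the coefficient of `e_k⊗e_l`
in `τ(eᵢ⊗eⱼ)`. -/
noncomputable def tauVV (K : Type*) [Field K] (n : ℕ) (q : K) :
    Matrix (Fin n × Fin n) (Fin n × Fin n) K :=
  Matrix.of fun kl ij =>
    if ij.1 = ij.2 then (if kl = ij then 1 else 0)
    else
      (if (ij.1 : ℕ) < (ij.2 : ℕ) then (1 : K) else -1) * ((1 - q ^ 2) / (1 + q ^ 2))
          * (if kl = ij then 1 else 0)
        + (2 * q / (1 + q ^ 2)) * (if kl = (ij.2, ij.1) then 1 else 0)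

theorem one_sub_sq_div_sq_add_two_mul_div_sq {K : Type*} [Field K] {q : K}
    (h : 1 + q ^ 2 ≠ 0) : ((1 - q ^ 2) / (1 + q ^ 2)) ^ 2 + (2 * q / (1 + q ^ 2)) ^ 2 = 1 := by
  field_simp
  ring

theorem LinearMap.apply_apply_eq_self_of_reflection {R M : Type*} [CommRing R] [AddCommGroup M]
    [Module R M] (f : M →ₗ[R] M) {u v : M} {b c : R} (hbc : c ^ 2 + b ^ 2 = 1)
    (hu : f u = c • u + b • v) (hv : f v = b • u - c • v) : f (f u) = u := by
  rw [hu, map_add, map_smul, map_smul, hu, hv]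
  linear_combination (norm := module) hbc • u

theorem ite_lt_one_neg_one_swap {K : Type*} [Ring K] {i j : ℕ} (hij : i ≠ j) :
    (if j < i then (1 : K) else -1) = -(if i < j then 1 else -1) := by
  rcases hij.lt_or_gt with h | h <;> simp [h, h.not_gt]

section tauVV

variable {K : Type*} [Field K] {n : ℕ} {q : K}

theorem toLin'_tauVV_single_diag (i : Fin n) :
    toLin' (tauVV K n q) (Pi.single (i, i) 1) = Pi.single (i, i) 1 := by
  ext kl
  simp [tauVV, Pi.single_apply]

theorem toLin'_tauVV_single_of_ne {i j : Fin n} (hij : i ≠ j) :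
    toLin' (tauVV K n q) (Pi.single (i, j) 1) =
      ((if (i : ℕ) < j then (1 : K) else -1) * ((1 - q ^ 2) / (1 + q ^ 2))) •
          Pi.single (i, j) 1 + (2 * q / (1 + q ^ 2)) • Pi.single (j, i) 1 := by
  ext kl
  rw [toLin'_apply, mulVec_single_one]
  simp only [col_apply, tauVV, of_apply, if_neg hij, Pi.add_apply, Pi.smul_apply,
    Pi.single_apply, smul_eq_mul, mul_ite, mul_one, mul_zero]

end tauVV

theorem tauVV_involutive_general (K : Type*) [Field K] (n : ℕ)
    (q : K) (h : (1 : K) + q ^ 2 ≠ 0) :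
    Matrix.toLin' (tauVV K n q) ∘ₗ Matrix.toLin' (tauVV K n q) = LinearMap.id := by
  refine (Pi.basisFun K (Fin n × Fin n)).ext fun ⟨i, j⟩ => ?_
  simp only [Pi.basisFun_apply, LinearMap.comp_apply, LinearMap.id_apply]
  by_cases hij : i = j
  · subst hij
    rw [toLin'_tauVV_single_diag, toLin'_tauVV_single_diag]
  have hsign := ite_lt_one_neg_one_swap (K := K) (Fin.val_injective.ne hij)
  refine LinearMap.apply_apply_eq_self_of_reflection _ ?_ (toLin'_tauVV_single_of_ne hij) ?_
  · have hsign_sq : (if (i : ℕ) < j then (1 : K) else -1) ^ 2 = 1 := by split_ifs <;> norm_num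
    rw [mul_pow, hsign_sq, one_mul]
    exact one_sub_sq_div_sq_add_two_mul_div_sq h
  · rw [toLin'_tauVV_single_of_ne (Ne.symm hij), hsign]
    module

/-- The linear operator `τ` on `Kⁿ⊗Kⁿ` is an involution: `τ ∘ τ = id`
(assuming `1 + q² ≠ 0`). -/
theorem tauVV_involutive (K : Type*) [Field K] (n : ℕ) (hn : 1 ≤ n)
    (q : K) (hq : q ≠ 0) (h : (1 : K) + q ^ 2 ≠ 0) :
    Matrix.toLin' (tauVV K n q) ∘ₗ Matrix.toLin' (tauVV K n q) = LinearMap.id :=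
  tauVV_involutive_general K n q h
end

section
/- For every 1 ≤ k ≤ n the following two identities hold in M_{n²}(K): (P_k ⊗ Iₙ)·R = (P_k⊗P_k)·R·(P_k⊗P_k) + P_k ⊗ (Iₙ − P_k), and R·(Iₙ ⊗ P_k) = (P_k⊗P_k)·R·(P_k⊗P_k) + (Iₙ − P_k) ⊗ P_k, where P_k = Σ_{i=1}^{k} E_{ii}. -/
/-!
The nonzero entries of `R` lie on the diagonal or at positions `((a, b), (b, a))` with `b < a`.
Hence `R` commutes with every diagonal matrix that is invariant under swapping the two tensor
factors, such as `P_k ⊗ P_k`. Moreover row `(a, b)` of `R` with `a < b`, and column `(c, d)` with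
`d < c`, agree with those of the identity; since `P_k` projects onto an initial segment, these are
the only rows seen by `P_k ⊗ (1 - P_k)` and the only columns seen by `(1 - P_k) ⊗ P_k`. Splitting
`P_k ⊗ 1` and `1 ⊗ P_k` along `1 = P_k + (1 - P_k)` gives both identities.
-/

open Matrix Kronecker

/-- The R-matrix `R = q·Σᵢ E_{ii}⊗E_{ii} + Σ_{i≠j} E_{ii}⊗E_{jj} + (q−q⁻¹)·Σ_{i<k} E_{ki}⊗E_{ik}`
(overall scalar `q^{−1/n}` omitted). -/
noncomputable def Rmat (K : Type*) [Field K] (n : ℕ) (q : K) :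
    Matrix (Fin n × Fin n) (Fin n × Fin n) K :=
  q • (∑ i : Fin n, Matrix.single i i (1 : K) ⊗ₖ Matrix.single i i (1 : K))
    + ∑ i : Fin n, ∑ j : Fin n,
        (if i ≠ j then Matrix.single i i (1 : K) ⊗ₖ Matrix.single j j (1 : K) else 0)
    + (q - q⁻¹) • ∑ i : Fin n, ∑ k : Fin n,
        (if i < k then Matrix.single k i (1 : K) ⊗ₖ Matrix.single i k (1 : K) else 0)

/-- The rank-`k` projector `P_k = Σ_{i=1}^{k} E_{ii}` (0-indexed: `i < k`). -/
def rankProj (K : Type*) [Field K] (n k : ℕ) : Matrix (Fin n) (Fin n) K :=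
  Matrix.diagonal fun i => if (i : ℕ) < k then 1 else 0

theorem Matrix.ite_single_eq_single_ite {l m α : Type*} [Zero α] [DecidableEq l] [DecidableEq m]
    (P : Prop) [Decidable P] (i : l) (j : m) (a : α) :
    (if P then single i j a else 0) = single i j (if P then a else 0) := by
  split_ifs <;> simp

section Rmat

variable {K : Type*} [Field K] {n : ℕ} (q : K)

theorem Rmat_apply (a b c d : Fin n) :
    Rmat K n q (a, b) (c, d) = (if (a, b) = (c, d) then (if a = b then q else 1) else 0)
      + (if (a, b) = (d, c) ∧ b < a then q - q⁻¹ else 0) := by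
  simp only [Rmat, single_kronecker_single, mul_one, ite_single_eq_single_ite, Matrix.add_apply,
    Matrix.smul_apply, Matrix.sum_apply, single_apply, Prod.mk.injEq, ite_and,
    Finset.sum_ite_irrel, Finset.sum_const_zero, Finset.sum_ite_eq', Finset.mem_univ, if_true]
  split_ifs <;> simp_all

theorem Rmat_apply_eq_zero {x y : Fin n × Fin n} (hx : y ≠ x) (hswap : y ≠ x.swap) :
    Rmat K n q x y = 0 := by
  obtain ⟨a, b⟩ := x
  obtain ⟨c, d⟩ := y
  have h1 : (a, b) ≠ (c, d) := Ne.symm hx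
  have h2 : (a, b) ≠ (d, c) := fun h => hswap (by simp_all)
  simp [Rmat_apply, h1, h2]

theorem Rmat_apply_of_lt {a b : Fin n} (hab : a < b) (y : Fin n × Fin n) :
    Rmat K n q (a, b) y = (1 : Matrix (Fin n × Fin n) (Fin n × Fin n) K) (a, b) y := by
  obtain ⟨c, d⟩ := y
  simp [Rmat_apply, one_apply, hab.ne, hab.not_gt]

theorem Rmat_apply_of_gt {c d : Fin n} (hdc : d < c) (x : Fin n × Fin n) :
    Rmat K n q x (c, d) = (1 : Matrix (Fin n × Fin n) (Fin n × Fin n) K) x (c, d) := by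
  obtain ⟨a, b⟩ := x
  have hswap : ¬((a, b) = (d, c) ∧ b < a) := by
    rintro ⟨h, hba⟩
    simp only [Prod.mk.injEq] at h
    exact hdc.not_gt (h.1 ▸ h.2 ▸ hba)
  rw [Rmat_apply, if_neg hswap, add_zero]
  by_cases h : (a, b) = (c, d)
  · obtain ⟨rfl, rfl⟩ := Prod.mk.inj h
    simp [hdc.ne']
  · rw [if_neg h, one_apply_ne h]

theorem diagonal_mul_Rmat {d : Fin n × Fin n → K} (hd : ∀ x, d x ≠ 0 → x.1 < x.2) :
    diagonal d * Rmat K n q = diagonal d := by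
  conv_rhs => rw [← mul_one (diagonal d)]
  ext x y
  rw [diagonal_mul, diagonal_mul]
  by_cases hx : d x = 0
  · rw [hx, zero_mul, zero_mul]
  · rw [Rmat_apply_of_lt q (hd x hx)]

theorem Rmat_mul_diagonal {d : Fin n × Fin n → K} (hd : ∀ y, d y ≠ 0 → y.2 < y.1) :
    Rmat K n q * diagonal d = diagonal d := by
  conv_rhs => rw [← one_mul (diagonal d)]
  ext x y
  rw [mul_diagonal, mul_diagonal]
  by_cases hy : d y = 0
  · rw [hy, mul_zero, mul_zero]
  · rw [Rmat_apply_of_gt q (hd y hy)]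

theorem commute_diagonal_Rmat {d : Fin n × Fin n → K} (hd : ∀ x, d x.swap = d x) :
    Commute (diagonal d) (Rmat K n q) := by
  ext x y
  rw [diagonal_mul, mul_diagonal]
  by_cases hx : y = x
  · rw [hx, mul_comm]
  by_cases hswap : y = x.swap
  · rw [hswap, hd, mul_comm]
  · simp [Rmat_apply_eq_zero q hx hswap]

end Rmat

section rankProj

variable (K : Type*) [Field K] (n k : ℕ)

theorem rankProj_mul_self : rankProj K n k * rankProj K n k = rankProj K n k := by
  simp [rankProj]

theorem rankProj_kronecker_rankProj_mul_self :
    (rankProj K n k ⊗ₖ rankProj K n k) * (rankProj K n k ⊗ₖ rankProj K n k)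
      = rankProj K n k ⊗ₖ rankProj K n k := by
  rw [← mul_kronecker_mul, rankProj_mul_self]

theorem commute_rankProj_kronecker_rankProj_Rmat (q : K) :
    Commute (rankProj K n k ⊗ₖ rankProj K n k) (Rmat K n q) := by
  rw [rankProj, diagonal_kronecker_diagonal]
  exact commute_diagonal_Rmat q fun x => mul_comm _ _

theorem one_sub_rankProj :
    1 - rankProj K n k = diagonal fun i : Fin n => if (i : ℕ) < k then 0 else 1 := by
  rw [rankProj, ← diagonal_one, diagonal_sub]
  congr 1
  ext i
  split_ifs <;> simp

theorem rankProj_kronecker_one_sub_rankProj_mul_Rmat (q : K) :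
    (rankProj K n k ⊗ₖ (1 - rankProj K n k)) * Rmat K n q
      = rankProj K n k ⊗ₖ (1 - rankProj K n k) := by
  rw [one_sub_rankProj, rankProj, diagonal_kronecker_diagonal]
  refine diagonal_mul_Rmat q fun x hx => ?_
  simp at hx
  omega

theorem Rmat_mul_one_sub_rankProj_kronecker_rankProj (q : K) :
    Rmat K n q * ((1 - rankProj K n k) ⊗ₖ rankProj K n k)
      = (1 - rankProj K n k) ⊗ₖ rankProj K n k := by
  rw [one_sub_rankProj, rankProj, diagonal_kronecker_diagonal]
  refine Rmat_mul_diagonal q fun x hx => ?_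
  simp at hx
  omega

end rankProj

theorem rankProj_R_identities_general (K : Type*) [Field K] (n : ℕ) (q : K)
    (k : ℕ) :
    (rankProj K n k ⊗ₖ (1 : Matrix (Fin n) (Fin n) K)) * Rmat K n q
      = (rankProj K n k ⊗ₖ rankProj K n k) * Rmat K n q
          * (rankProj K n k ⊗ₖ rankProj K n k)
        + rankProj K n k ⊗ₖ ((1 : Matrix (Fin n) (Fin n) K) - rankProj K n k) ∧
    Rmat K n q * ((1 : Matrix (Fin n) (Fin n) K) ⊗ₖ rankProj K n k)
      = (rankProj K n k ⊗ₖ rankProj K n k) * Rmat K n q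
          * (rankProj K n k ⊗ₖ rankProj K n k)
        + ((1 : Matrix (Fin n) (Fin n) K) - rankProj K n k) ⊗ₖ rankProj K n k := by
  set P := rankProj K n k
  have hcomm := commute_rankProj_kronecker_rankProj_Rmat K n k q
  have hconj : (P ⊗ₖ P) * Rmat K n q * (P ⊗ₖ P) = Rmat K n q * (P ⊗ₖ P) := by
    rw [hcomm.eq, mul_assoc, rankProj_kronecker_rankProj_mul_self]
  constructor
  · calc (P ⊗ₖ 1) * Rmat K n q = (P ⊗ₖ P + P ⊗ₖ (1 - P)) * Rmat K n q := by
          rw [← kronecker_add, add_sub_cancel]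
      _ = (P ⊗ₖ P) * Rmat K n q * (P ⊗ₖ P) + P ⊗ₖ (1 - P) := by
          rw [add_mul, rankProj_kronecker_one_sub_rankProj_mul_Rmat, hconj, hcomm.eq]
  · calc Rmat K n q * (1 ⊗ₖ P) = Rmat K n q * (P ⊗ₖ P + (1 - P) ⊗ₖ P) := by
          rw [← add_kronecker, add_sub_cancel]
      _ = (P ⊗ₖ P) * Rmat K n q * (P ⊗ₖ P) + (1 - P) ⊗ₖ P := by
          rw [mul_add, Rmat_mul_one_sub_rankProj_kronecker_rankProj, hconj]

/-- The identities `(P_k⊗I)·R = (P_k⊗P_k)·R·(P_k⊗P_k) + P_k⊗(I−P_k)` and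
`R·(I⊗P_k) = (P_k⊗P_k)·R·(P_k⊗P_k) + (I−P_k)⊗P_k`. -/
theorem rankProj_R_identities (K : Type*) [Field K] (n : ℕ) (q : K) (hq : q ≠ 0)
    (k : ℕ) (hk : 1 ≤ k) (hkn : k ≤ n) :
    (rankProj K n k ⊗ₖ (1 : Matrix (Fin n) (Fin n) K)) * Rmat K n q
      = (rankProj K n k ⊗ₖ rankProj K n k) * Rmat K n q
          * (rankProj K n k ⊗ₖ rankProj K n k)
        + rankProj K n k ⊗ₖ ((1 : Matrix (Fin n) (Fin n) K) - rankProj K n k) ∧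
    Rmat K n q * ((1 : Matrix (Fin n) (Fin n) K) ⊗ₖ rankProj K n k)
      = (rankProj K n k ⊗ₖ rankProj K n k) * Rmat K n q
          * (rankProj K n k ⊗ₖ rankProj K n k)
        + ((1 : Matrix (Fin n) (Fin n) K) - rankProj K n k) ⊗ₖ rankProj K n k :=
  rankProj_R_identities_general K n q k
end

section
/- Let λ₁,…,λₙ ∈ K and suppose there is c ∈ K with λᵢ·λ_{n+1−i} = c for all i = 1,…,n. Then the skew-diagonal matrix A ∈ Mₙ(K) with entries A_{n+1−i, i} = λᵢ and all other entries zero satisfies the numeric reflection equation, and moreover A² = c·Iₙ. -/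
open Matrix Kronecker

/-- The skew-diagonal matrix with `A_{n+1−i,i} = λᵢ` (0-indexed: `A_{r,c} = λ_c` when
`r + c + 1 = n`) and all other entries zero. -/
def skewDiag {K : Type*} [Zero K] (n : ℕ) (lam : Fin n → K) : Matrix (Fin n) (Fin n) K :=
  Matrix.of fun r c => if (r : ℕ) + (c : ℕ) + 1 = n then lam c else 0

/-! Both `S` and `A₂ = 1 ⊗ A` are of the form `M p x = u p [x = π p] + v p [x = p]` on the index
set `Fin n × Fin n`: for `S` the map `π` is the flip `(a, b) ↦ (b, a)`, for `A₂` it is the involution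
`(a, b) ↦ (a, n - 1 - b)` with `v = 0`. Conjugating `S` by `A₂` gives again such a matrix, now with
`π (a, b) = (n - 1 - b, n - 1 - a)`, which commutes with the flip. The reflection equation says that
`A₂ S A₂` commutes with `S`, and for two matrices of this shape commuting reduces to pointwise
identities between the weights; the only non-formal one is `λ_b λ_{n-1-b} = c = λ_a λ_{n-1-a}`. -/

namespace Matrix

variable {ι R : Type*} [DecidableEq ι]

def monomialAddDiag [AddZeroClass R] (π : ι → ι) (u v : ι → R) : Matrix ι ι R :=
  of fun p x => (if x = π p then u p else 0) + (if x = p then v p else 0)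

section Semiring

variable [Semiring R]

theorem one_kronecker_monomialAddDiag {κ : Type*} [DecidableEq κ] (π : ι → ι) (u v : ι → R) :
    (1 : Matrix κ κ R) ⊗ₖ monomialAddDiag π u v =
      monomialAddDiag (Prod.map id π) (u ∘ Prod.snd) (v ∘ Prod.snd) := by
  ext ⟨a, b⟩ ⟨c, d⟩
  simp only [kroneckerMap_apply, one_apply, monomialAddDiag, of_apply, Prod.map, id,
    Prod.mk.injEq, Function.comp_apply]
  rcases eq_or_ne a c with rfl | h
  · simp
  · simp [h, h.symm]

variable [Fintype ι]

theorem monomialAddDiag_mul_monomialAddDiag (π π' : ι → ι) (u v u' v' : ι → R) :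
    monomialAddDiag π u v * monomialAddDiag π' u' v' = of fun p x =>
      (if x = π' (π p) then u p * u' (π p) else 0) + (if x = π p then u p * v' (π p) else 0)
        + (if x = π' p then v p * u' p else 0) + (if x = p then v p * v' p else 0) := by
  ext p x
  simp only [monomialAddDiag, mul_apply, of_apply, add_mul, ite_mul, zero_mul,
    Finset.sum_add_distrib, Finset.sum_ite_eq', Finset.mem_univ, if_true]
  simp only [mul_add, mul_ite, mul_zero, add_assoc]

theorem monomialAddDiag_zero_mul_apply (π : ι → ι) (w : ι → R) (M : Matrix ι ι R) (p x : ι) :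
    (monomialAddDiag π w 0 * M) p x = w p * M (π p) x := by
  simp only [mul_apply, monomialAddDiag, of_apply, Pi.zero_apply, ite_self, add_zero, ite_mul,
    zero_mul, Finset.sum_ite_eq', Finset.mem_univ, if_true]

theorem mul_monomialAddDiag_zero_apply {e : ι → ι} (he : Function.Involutive e) (w : ι → R)
    (M : Matrix ι ι R) (p x : ι) :
    (M * monomialAddDiag e w 0) p x = M p (e x) * w (e x) := by
  have hx : ∀ y, (x = e y) ↔ (y = e x) := fun y => he.eq_iff.symm.trans eq_comm
  simp only [mul_apply, monomialAddDiag, of_apply, Pi.zero_apply, ite_self, add_zero, hx, mul_ite,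
    mul_zero, Finset.sum_ite_eq', Finset.mem_univ, if_true]

theorem monomialAddDiag_conj {e : ι → ι} (he : Function.Involutive e) (w : ι → R)
    (π : ι → ι) (u v : ι → R) :
    monomialAddDiag e w 0 * monomialAddDiag π u v * monomialAddDiag e w 0 =
      monomialAddDiag (e ∘ π ∘ e) (fun p => w p * u (e p) * w (π (e p)))
        (fun p => w p * v (e p) * w (e p)) := by
  ext p x
  rw [mul_monomialAddDiag_zero_apply he, monomialAddDiag_zero_mul_apply]
  simp only [monomialAddDiag, of_apply, Function.comp_apply, he.eq_iff, he p, mul_add, add_mul,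
    mul_ite, ite_mul, mul_zero, zero_mul]
  congr 1 <;> split_ifs with h <;> simp only [h, he _]

end Semiring

theorem commute_monomialAddDiag [CommSemiring R] [Fintype ι] {π π' : ι → ι} {u v u' v' : ι → R}
    (hπ : ∀ p, π' (π p) = π (π' p)) (hu : ∀ p, u p * u' (π p) = u' p * u (π' p))
    (hv : ∀ p, v (π' p) = v p) (hv' : ∀ p, v' (π p) = v' p) :
    Commute (monomialAddDiag π u v) (monomialAddDiag π' u' v') := by
  rw [Commute, SemiconjBy, monomialAddDiag_mul_monomialAddDiag,
    monomialAddDiag_mul_monomialAddDiag]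
  ext p x
  simp only [of_apply, hπ, hu, hv, hv']
  ring_nf

end Matrix

open Matrix

theorem heckeS_eq_monomialAddDiag (K : Type*) [Field K] (n : ℕ) (q : K) :
    heckeS K n q = monomialAddDiag Prod.swap (fun p => if p.1 = p.2 then q else 1)
      (fun p => if p.1 < p.2 then q - q⁻¹ else 0) := by
  have single_ite (P : Prop) [Decidable P] (i j : Fin n × Fin n) :
      (if P then single i j (1 : K) else 0) = single i j (if P then 1 else 0) := by
    split_ifs <;> simp
  ext ⟨a, b⟩ ⟨c, d⟩
  simp only [heckeS, single_ite, single_kronecker_single, Matrix.add_apply, Matrix.smul_apply,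
    Matrix.sum_apply, single_apply, Prod.mk.injEq, ite_and, mul_one, Finset.sum_ite_irrel,
    Finset.sum_const_zero, Finset.sum_ite_eq', Finset.mem_univ, if_true, monomialAddDiag,
    of_apply, smul_eq_mul, Prod.swap_prod_mk]
  grind

theorem skewDiag_eq_monomialAddDiag {K : Type*} [Semiring K] (n : ℕ) (lam : Fin n → K) :
    skewDiag n lam = monomialAddDiag Fin.rev (lam ∘ Fin.rev) 0 := by
  ext r s
  have : (r : ℕ) + s + 1 = n ↔ s = r.rev := by rw [Fin.ext_iff, Fin.val_rev]; omega
  simp only [skewDiag, monomialAddDiag, of_apply, this, Pi.zero_apply, ite_self, add_zero,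
    Function.comp_apply]
  split_ifs with h <;> simp [h]

theorem one_kronecker_skewDiag {K : Type*} [Semiring K] (n : ℕ) (lam : Fin n → K) :
    (1 : Matrix (Fin n) (Fin n) K) ⊗ₖ skewDiag n lam =
      monomialAddDiag (Prod.map id Fin.rev) (fun p => lam p.2.rev) 0 := by
  rw [skewDiag_eq_monomialAddDiag, one_kronecker_monomialAddDiag]
  rfl

theorem skewDiag_mul_self {K : Type*} [CommSemiring K] {n : ℕ} {lam : Fin n → K} {c : K}
    (hlam : ∀ i : Fin n, lam i * lam i.rev = c) :
    skewDiag n lam * skewDiag n lam = c • (1 : Matrix (Fin n) (Fin n) K) := by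
  ext r s
  have h := hlam r.rev
  rw [Fin.rev_rev] at h
  rw [skewDiag_eq_monomialAddDiag, monomialAddDiag_mul_monomialAddDiag]
  simp [h, one_apply, eq_comm]

theorem commute_skewDiag_conj_heckeS {K : Type*} [Field K] {n : ℕ} (q : K) {lam : Fin n → K}
    {c : K} (hlam : ∀ i : Fin n, lam i * lam i.rev = c) :
    Commute ((1 : Matrix (Fin n) (Fin n) K) ⊗ₖ skewDiag n lam * heckeS K n q
      * ((1 : Matrix (Fin n) (Fin n) K) ⊗ₖ skewDiag n lam)) (heckeS K n q) := by
  rw [one_kronecker_skewDiag, heckeS_eq_monomialAddDiag,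
    monomialAddDiag_conj (Function.Involutive.prodMap (fun _ => rfl) Fin.rev_involutive)]
  apply commute_monomialAddDiag
  · rintro ⟨a, b⟩
    simp
  · rintro ⟨a, b⟩
    have hrev : b = a.rev ↔ a = b.rev := by rw [eq_comm, Fin.rev_eq_iff]
    simp only [Prod.map_apply, id_eq, Prod.swap_prod_mk, Function.comp_apply, Fin.rev_inj, hrev,
      eq_comm (a := b) (b := a)]
    split_ifs <;> ring
  · rintro ⟨a, b⟩
    simp only [Prod.swap_prod_mk, Prod.map_apply, id_eq, Fin.lt_rev_iff, mul_ite, mul_zero,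
      Fin.rev_rev, ite_mul, zero_mul]
    split_ifs
    · linear_combination (q - q⁻¹) * (hlam a - hlam b)
    · rfl
  · rintro ⟨a, b⟩
    simp [Fin.rev_lt_rev]

theorem skewDiag_reflection_general (K : Type*) [Field K] (n : ℕ) (q : K)
    (lam : Fin n → K) (c : K) (hlam : ∀ i : Fin n, lam i * lam i.rev = c) :
    ((1 : Matrix (Fin n) (Fin n) K) ⊗ₖ skewDiag n lam) * heckeS K n q
        * ((1 : Matrix (Fin n) (Fin n) K) ⊗ₖ skewDiag n lam) * heckeS K n q
      = heckeS K n q * ((1 : Matrix (Fin n) (Fin n) K) ⊗ₖ skewDiag n lam)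
        * heckeS K n q * ((1 : Matrix (Fin n) (Fin n) K) ⊗ₖ skewDiag n lam) ∧
    skewDiag n lam * skewDiag n lam = c • (1 : Matrix (Fin n) (Fin n) K) :=
  ⟨by simpa only [mul_assoc] using (commute_skewDiag_conj_heckeS q hlam).eq,
    skewDiag_mul_self hlam⟩

/-- If `λᵢ·λ_{n+1−i} = c` for all `i`, the skew-diagonal matrix with entries `λᵢ` satisfies
the numeric reflection equation and squares to `c·Iₙ`. -/
theorem skewDiag_reflection (K : Type*) [Field K] (n : ℕ) (hn : 1 ≤ n) (q : K) (hq : q ≠ 0)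
    (lam : Fin n → K) (c : K) (hlam : ∀ i : Fin n, lam i * lam i.rev = c) :
    ((1 : Matrix (Fin n) (Fin n) K) ⊗ₖ skewDiag n lam) * heckeS K n q
        * ((1 : Matrix (Fin n) (Fin n) K) ⊗ₖ skewDiag n lam) * heckeS K n q
      = heckeS K n q * ((1 : Matrix (Fin n) (Fin n) K) ⊗ₖ skewDiag n lam)
        * heckeS K n q * ((1 : Matrix (Fin n) (Fin n) K) ⊗ₖ skewDiag n lam) ∧
    skewDiag n lam * skewDiag n lam = c • (1 : Matrix (Fin n) (Fin n) K) :=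
  skewDiag_reflection_general K n q lam c hlam
end

section
/- Let 𝒜 be a unital associative K-algebra, T ∈ Mₙ(𝒜) an invertible matrix satisfying the FRT relations, and A ∈ Mₙ(K) a scalar matrix (regarded in Mₙ(𝒜)). Then the quantum trace is invariant under conjugation by T: Tr(D·T⁻¹·A·T) = Tr(D·A)·1_𝒜 in 𝒜. -/
open Matrix Kronecker

/-- The diagonal matrix `D = Σᵢ q^{−2i+2}·E_{ii}` defining the quantum trace
`Tr_q(M) = Tr(D·M)`. -/
noncomputable def qTraceD (K : Type*) [Field K] (n : ℕ) (q : K) : Matrix (Fin n) (Fin n) K :=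
  Matrix.diagonal fun i : Fin n => q ^ (-(2 * (i : ℕ) : ℤ))

/-!
Conjugating the FRT relation `S (T ⊗ 1)(1 ⊗ T) = (T ⊗ 1)(1 ⊗ T) S` gives
`(T⁻¹ ⊗ 1) S (T ⊗ 1) = (1 ⊗ T) S (1 ⊗ T⁻¹)`. Take the partial quantum trace of both sides over
the first tensor factor, with weights `d_i = q^{-2i}`. On the right the weights satisfy
`q d_k + (q - q⁻¹) Σ_{i<k} d_i = q`, so the result is `q • 1`. On the left one gets a triangular
system in the pairings `X_{ab} = Σ_i d_i (T⁻¹)_{ia} T_{bi}` whose solution is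
`X_{ab} = δ_{ab} d_a`. Finally `Tr_q(T⁻¹ A T) = Σ_{a,b} A_{ab} X_{ab}`.
-/

noncomputable def qWeight {K : Type*} [Field K] (q : K) (m : ℕ) : K := q ^ (-(2 * m : ℤ))

section Weights

variable {K : Type*} [Field K] {q : K}

theorem mul_qWeight_add_sum_range (hq : q ≠ 0) (m : ℕ) :
    q * qWeight q m + (q - q⁻¹) * ∑ j ∈ Finset.range m, qWeight q j = q := by
  have telescope : ∀ j : ℕ,
      (q - q⁻¹) * qWeight q j = q * qWeight q j - q * qWeight q (j + 1) := by
    intro j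
    simp only [qWeight, Nat.cast_add, Nat.cast_one, mul_add, mul_one, neg_add, zpow_add₀ hq,
      _root_.zpow_neg]
    field_simp
  rw [Finset.mul_sum, Finset.sum_congr rfl fun j _ => telescope j, Finset.sum_range_sub']
  simp [qWeight]

theorem mul_qWeight_add_sum_Iio (hq : q ≠ 0) {n : ℕ} (a : Fin n) :
    q * qWeight q a + (q - q⁻¹) * ∑ k ∈ Finset.Iio a, qWeight q k = q := by
  have hsum : ∑ k ∈ Finset.Iio a, qWeight q k = ∑ j ∈ Finset.range a, qWeight q j := by
    rw [← Nat.Iio_eq_range, ← Fin.map_valEmbedding_Iio, Finset.sum_map]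
    rfl
  rw [hsum, mul_qWeight_add_sum_range hq]

theorem eq_qWeight_smul_of_triangular (hq : q ≠ 0) {n : ℕ} {M : Type*} [AddCommGroup M]
    [Module K M] {x : M} {y : Fin n → M}
    (h : ∀ a, q • y a + (q - q⁻¹) • ∑ k ∈ Finset.Iio a, y k = q • x) (a : Fin n) :
    y a = qWeight q a • x := by
  induction a using WellFoundedLT.induction with
  | ind a ih =>
    have hlower : ∑ k ∈ Finset.Iio a, y k = (∑ k ∈ Finset.Iio a, qWeight q k) • x := by
      rw [Finset.sum_smul]
      exact Finset.sum_congr rfl fun k hk => ih k (Finset.mem_Iio.1 hk)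
    apply smul_right_injective M hq
    beta_reduce
    rw [smul_smul, eq_sub_of_add_eq (h a), hlower, smul_smul, ← sub_smul]
    congr 1
    linear_combination -mul_qWeight_add_sum_Iio hq a

end Weights

theorem heckeS_apply {K : Type*} [Field K] {n : ℕ} (q : K) (r s t u : Fin n) :
    heckeS K n q (r, s) (t, u) =
      (if t = s ∧ u = r then (if r = s then q else 1) else 0)
        + if r < s ∧ t = r ∧ u = s then q - q⁻¹ else 0 := by
  simp only [heckeS, Matrix.add_apply, Matrix.smul_apply, Matrix.sum_apply, Matrix.ite_apply,
    Matrix.zero_apply, single_kronecker_single, single_apply, Prod.mk.injEq, mul_one, smul_eq_mul]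
  have sum_sum_eq_single : ∀ f : Fin n → Fin n → K, (∀ x y, (x, y) ≠ (r, s) → f x y = 0) →
      ∑ x, ∑ y, f x y = f r s := fun f hf => by
    rw [← Fintype.sum_prod_type', Fintype.sum_eq_single (r, s) fun p hp => hf p.1 p.2 hp]
  rw [Fintype.sum_eq_single r (fun c hc => if_neg (by tauto)),
    sum_sum_eq_single _ (fun x y h => by aesop), sum_sum_eq_single _ (fun x y h => by aesop)]
  clear sum_sum_eq_single
  split_ifs <;> grind

theorem mul_mul_eq_mul_mul_of_commute {M : Type*} [Monoid M] {s x x' y y' : M}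
    (h : Commute s (x * y)) (hx : x' * x = 1) (hy : y * y' = 1) :
    x' * s * x = y * s * y' :=
  calc x' * s * x = x' * (s * (x * y)) * y' := by
        simp only [← mul_assoc, mul_assoc _ y, hy, mul_one]
    _ = x' * (x * y * s) * y' := by rw [h.eq]
    _ = y * s * y' := by simp only [← mul_assoc, hx, one_mul]

section Kronecker

variable {l m n o p : Type*} [Fintype m] [Fintype n] [DecidableEq n] [Fintype p]
  {α : Type*} [Semiring α]

theorem kronecker_one_mul_kronecker_one (P : Matrix l m α) (Q : Matrix m o α) :
    (P ⊗ₖ (1 : Matrix n n α)) * (Q ⊗ₖ (1 : Matrix n n α)) = (P * Q) ⊗ₖ (1 : Matrix n n α) := by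
  simp only [kronecker_one, blockDiagonal_mul]

theorem one_kronecker_mul_one_kronecker (P : Matrix l m α) (Q : Matrix m o α) :
    ((1 : Matrix n n α) ⊗ₖ P) * ((1 : Matrix n n α) ⊗ₖ Q) = (1 : Matrix n n α) ⊗ₖ (P * Q) := by
  simp only [one_kronecker, reindex_apply, submatrix_mul_equiv, blockDiagonal_mul]

theorem kronecker_one_mul_mul_kronecker_one_apply (P : Matrix l m α)
    (S : Matrix (m × n) (p × n) α) (Q : Matrix p o α) (i : l) (j : o) (a b : n) :
    ((P ⊗ₖ (1 : Matrix n n α)) * S * (Q ⊗ₖ (1 : Matrix n n α))) (i, a) (j, b)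
      = ∑ k, ∑ k', P i k * S (k, a) (k', b) * Q k' j := by
  simp only [mul_apply, kroneckerMap_apply, one_apply, mul_ite, mul_one, mul_zero, ite_mul,
    zero_mul, Fintype.sum_prod_type, Finset.sum_ite_eq, Finset.sum_ite_eq', Finset.mem_univ, if_true,
    Finset.sum_mul]
  exact Finset.sum_comm

theorem one_kronecker_mul_mul_one_kronecker_apply (P : Matrix l m α)
    (S : Matrix (n × m) (n × p) α) (Q : Matrix p o α) (i j : n) (a : l) (b : o) :
    (((1 : Matrix n n α) ⊗ₖ P) * S * ((1 : Matrix n n α) ⊗ₖ Q)) (i, a) (j, b)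
      = ∑ k, ∑ k', P a k * S (i, k) (j, k') * Q k' b := by
  simp only [mul_apply, kroneckerMap_apply, one_apply, ite_mul, one_mul, zero_mul, mul_ite,
    mul_zero, Fintype.sum_prod_type, Finset.sum_ite_irrel, Finset.sum_const_zero, Finset.sum_ite_eq,
    Finset.sum_ite_eq', Finset.mem_univ, if_true, Finset.sum_mul]
  exact Finset.sum_comm

end Kronecker

section QuantumTrace

variable {K : Type*} [Field K] {n : ℕ} {B : Type*} [Ring B] [Algebra K B] (q : K)

theorem kronecker_one_mul_heckeS_mul_kronecker_one_apply (P Q : Matrix (Fin n) (Fin n) B)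
    (i j a b : Fin n) :
    ((P ⊗ₖ (1 : Matrix (Fin n) (Fin n) B)) * (heckeS K n q).map (algebraMap K B)
        * (Q ⊗ₖ (1 : Matrix (Fin n) (Fin n) B))) (i, a) (j, b)
      = (if b = a then q else 1) • (P i b * Q a j)
        + if b = a then (q - q⁻¹) • ∑ k ∈ Finset.Iio a, P i k * Q k j else 0 := by
  rw [kronecker_one_mul_mul_kronecker_one_apply, ← Finset.filter_gt_eq_Iio, Finset.sum_filter]
  simp only [map_apply, heckeS_apply, map_add, apply_ite (algebraMap K B), map_zero, add_mul,
    mul_add, ite_mul, mul_ite, zero_mul, mul_zero, Finset.sum_add_distrib, mul_assoc,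
    ← Algebra.smul_def, mul_smul_comm, ite_and, Finset.sum_ite_eq, Finset.sum_ite_eq',
    Finset.sum_ite_irrel, Finset.sum_const_zero, Finset.mem_univ, if_true, Finset.smul_sum,
    smul_ite, smul_zero]
  split_ifs <;> simp

theorem one_kronecker_mul_heckeS_mul_one_kronecker_apply_same (P Q : Matrix (Fin n) (Fin n) B)
    (i a b : Fin n) :
    (((1 : Matrix (Fin n) (Fin n) B) ⊗ₖ P) * (heckeS K n q).map (algebraMap K B)
        * ((1 : Matrix (Fin n) (Fin n) B) ⊗ₖ Q)) (i, a) (i, b)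
      = q • (P a i * Q i b) + (q - q⁻¹) • ∑ k ∈ Finset.Ioi i, P a k * Q k b := by
  rw [one_kronecker_mul_mul_one_kronecker_apply, ← Finset.filter_lt_eq_Ioi, Finset.sum_filter]
  simp only [map_apply, heckeS_apply, map_add, apply_ite (algebraMap K B), map_zero, add_mul,
    mul_add, ite_mul, mul_ite, zero_mul, mul_zero, Finset.sum_add_distrib, mul_assoc,
    ← Algebra.smul_def, mul_smul_comm, ite_and, Finset.sum_ite_eq, Finset.sum_ite_eq',
    Finset.sum_ite_irrel, Finset.sum_const_zero, Finset.mem_univ, if_true, Finset.smul_sum,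
    smul_ite, smul_zero]

noncomputable def qPartialTrace (M : Matrix (Fin n × Fin n) (Fin n × Fin n) B) :
    Matrix (Fin n) (Fin n) B :=
  of fun a b => ∑ i : Fin n, qWeight q i • M (i, a) (i, b)

noncomputable def qPairing (P Q : Matrix (Fin n) (Fin n) B) : Matrix (Fin n) (Fin n) B :=
  of fun a b => ∑ i : Fin n, qWeight q i • (P i a * Q b i)

theorem trace_map_qTraceD_mul (P Q : Matrix (Fin n) (Fin n) B) (A : Matrix (Fin n) (Fin n) K) :
    trace ((qTraceD K n q).map (algebraMap K B) * (P * A.map (algebraMap K B) * Q))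
      = ∑ a, ∑ b, A a b • qPairing q P Q a b := by
  simp only [qTraceD, diagonal_map (map_zero _), trace, diag, diagonal_mul, ← Algebra.smul_def]
  simp only [mul_apply, map_apply, qPairing, of_apply, Finset.sum_mul, mul_assoc,
    ← Algebra.smul_def, mul_smul_comm, Finset.smul_sum]
  rw [Finset.sum_comm_cycle]
  refine Finset.sum_congr rfl fun a _ => Finset.sum_comm.trans ?_
  simp only [qWeight, smul_smul, mul_comm]

theorem qPartialTrace_kronecker_one_conj_heckeS_apply (P Q : Matrix (Fin n) (Fin n) B)
    (a b : Fin n) :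
    qPartialTrace q ((P ⊗ₖ (1 : Matrix (Fin n) (Fin n) B)) * (heckeS K n q).map (algebraMap K B)
        * (Q ⊗ₖ (1 : Matrix (Fin n) (Fin n) B))) a b
      = (if b = a then q else 1) • qPairing q P Q b a
        + if b = a then (q - q⁻¹) • ∑ k ∈ Finset.Iio a, qPairing q P Q k k else 0 := by
  simp only [qPartialTrace, qPairing, of_apply, kronecker_one_mul_heckeS_mul_kronecker_one_apply,
    smul_add, Finset.sum_add_distrib, Finset.smul_sum, smul_ite, smul_zero,
    smul_comm (qWeight q _)]
  split_ifs
  · rw [Finset.sum_comm]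
  · simp

variable {q}

theorem qPartialTrace_one_kronecker_conj_heckeS (hq : q ≠ 0) {P Q : Matrix (Fin n) (Fin n) B}
    (hPQ : P * Q = 1) :
    qPartialTrace q (((1 : Matrix (Fin n) (Fin n) B) ⊗ₖ P) * (heckeS K n q).map (algebraMap K B)
        * ((1 : Matrix (Fin n) (Fin n) B) ⊗ₖ Q)) = q • 1 := by
  ext a b
  have hweight : ∀ k : Fin n, qWeight q k * q + ∑ i ∈ Finset.Iio k, qWeight q i * (q - q⁻¹) = q :=
    fun k => by rw [← Finset.sum_mul, mul_comm, mul_comm _ (q - q⁻¹), mul_qWeight_add_sum_Iio hq]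
  calc qPartialTrace q _ a b
      = ∑ k : Fin n, (qWeight q k * q + ∑ i ∈ Finset.Iio k, qWeight q i * (q - q⁻¹))
          • (P a k * Q k b) := by
        simp only [qPartialTrace, of_apply, one_kronecker_mul_heckeS_mul_one_kronecker_apply_same,
          smul_add, Finset.sum_add_distrib, Finset.smul_sum, smul_smul, add_smul, Finset.sum_smul]
        rw [Finset.sum_comm' (t' := Finset.univ) (s' := Finset.Iio) (by simp)]
    _ = (q • (1 : Matrix (Fin n) (Fin n) B)) a b := by
        simp only [hweight, Matrix.smul_apply, ← hPQ, mul_apply, Finset.smul_sum]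

theorem qPairing_eq_diagonal_of_conj_heckeS (hq : q ≠ 0) {P Q : Matrix (Fin n) (Fin n) B}
    (hQP : Q * P = 1)
    (hconj : (P ⊗ₖ (1 : Matrix (Fin n) (Fin n) B)) * (heckeS K n q).map (algebraMap K B)
        * (Q ⊗ₖ (1 : Matrix (Fin n) (Fin n) B))
      = ((1 : Matrix (Fin n) (Fin n) B) ⊗ₖ Q) * (heckeS K n q).map (algebraMap K B)
        * ((1 : Matrix (Fin n) (Fin n) B) ⊗ₖ P)) :
    qPairing q P Q = diagonal fun a : Fin n => qWeight q a • (1 : B) := by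
  have h : ∀ a b, (if b = a then q else 1) • qPairing q P Q b a
      + (if b = a then (q - q⁻¹) • ∑ k ∈ Finset.Iio a, qPairing q P Q k k else 0)
      = (q • (1 : Matrix (Fin n) (Fin n) B)) a b := fun a b => by
    have := congrFun₂ (congrArg (qPartialTrace q) hconj) a b
    rwa [qPartialTrace_one_kronecker_conj_heckeS hq hQP,
      qPartialTrace_kronecker_one_conj_heckeS_apply] at this
  ext a b
  rcases eq_or_ne a b with rfl | hab
  · rw [diagonal_apply_eq]
    exact eq_qWeight_smul_of_triangular (y := fun k => qPairing q P Q k k) hq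
      (fun a => by simpa using h a a) a
  · rw [diagonal_apply_ne _ hab]
    simpa [hab, Ne.symm hab] using h b a

end QuantumTrace

/-- For an invertible FRT matrix `T` over a `K`-algebra and a scalar matrix `A ∈ Mₙ(K)`,
the quantum trace is invariant under conjugation: `Tr_q(T⁻¹·A·T) = Tr_q(A)`. -/
theorem qTrace_conjugation_invariant (K : Type*) [Field K] (n : ℕ) (q : K) (hq : q ≠ 0)
    (B : Type*) [Ring B] [Algebra K B]
    (T Tinv : Matrix (Fin n) (Fin n) B)
    (hT : T * Tinv = 1) (hT' : Tinv * T = 1)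
    (hFRT : (heckeS K n q).map (algebraMap K B)
              * ((T ⊗ₖ (1 : Matrix (Fin n) (Fin n) B))
                  * ((1 : Matrix (Fin n) (Fin n) B) ⊗ₖ T))
          = ((T ⊗ₖ (1 : Matrix (Fin n) (Fin n) B))
              * ((1 : Matrix (Fin n) (Fin n) B) ⊗ₖ T))
              * (heckeS K n q).map (algebraMap K B))
    (A : Matrix (Fin n) (Fin n) K) :
    Matrix.trace ((qTraceD K n q).map (algebraMap K B)
        * (Tinv * A.map (algebraMap K B) * T))
      = algebraMap K B (Matrix.trace (qTraceD K n q * A)) := by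
  have hconj := mul_mul_eq_mul_mul_of_commute hFRT
    (by rw [kronecker_one_mul_kronecker_one, hT', one_kronecker_one])
    (by rw [one_kronecker_mul_one_kronecker, hT, one_kronecker_one])
  rw [trace_map_qTraceD_mul, qPairing_eq_diagonal_of_conj_heckeS hq hT hconj, trace, map_sum]
  refine Finset.sum_congr rfl fun a _ => ?_
  simp [diagonal_apply, qTraceD, qWeight, Algebra.algebraMap_eq_smul_one, smul_smul, mul_comm]
end

section
/- Let C be a commutative unital K-algebra, t ∈ C, and assume the quantum integers k̂_q are nonzero in K for 1 ≤ k ≤ m. Define σ⁰ = 1 and, recursively, σ^k = (k̂_q)⁻¹·Σ_{j=0}^{k−1} σ^j·(−1)^{k−j+1}·t for 1 ≤ k ≤ m. Then for every 1 ≤ k ≤ m one has the factorization (Π_{l=1}^{k} l̂_q)·σ^k = Π_{j=0}^{k−1} (t − ĵ_q·1). -/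
/-- The quantum integer `k̂_q = Σ_{i=1}^{k} q^{−2i+2}` (so `0̂_q = 0` and `1̂_q = 1`). -/
noncomputable def qInt {K : Type*} [Field K] (q : K) (k : ℕ) : K :=
  ∑ i ∈ Finset.range k, q ^ (-(2 * i : ℤ))

/-!
Write `S_k = Σ_{j ≤ k} (-1)^{k-j} σ^j`, so that the recursion reads `k̂ σ^k = S_{k-1} t` and
`S_k = σ^k - S_{k-1}`. With `P_k = Π_{l=1}^{k} l̂`, this gives
`P_{k+1} S_{k+1} = P_k S_k t - (k+1)̂ P_k S_k = P_k S_k (t - (k+1)̂)`, so by induction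
`P_k S_k = Π_{j=1}^{k} (t - ĵ)`, and then `P_{k+1} σ^{k+1} = P_k S_k t` is the claimed product,
the missing factor `t` being `t - 0̂`.
-/

open Finset

theorem qInt_zero {K : Type*} [Field K] (q : K) : qInt q 0 = 0 := by
  simp [qInt]

section AlternatingSum

variable {R : Type*} [Ring R] (σ : ℕ → R)

def altSum (k : ℕ) : R :=
  ∑ j ∈ range (k + 1), (-1) ^ (k - j) * σ j

theorem altSum_zero : altSum σ 0 = σ 0 := by
  simp [altSum]

theorem altSum_succ (k : ℕ) : altSum σ (k + 1) = σ (k + 1) - altSum σ k := by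
  have shift : ∀ j ∈ range (k + 1), (-1 : R) ^ (k + 1 - j) * σ j = -((-1) ^ (k - j) * σ j) := by
    intro j hj
    rw [Nat.sub_add_comm (Nat.lt_succ_iff.mp (mem_range.mp hj)), pow_succ]
    noncomm_ring
  rw [altSum, sum_range_succ, sum_congr rfl shift, sum_neg_distrib, Nat.sub_self, pow_zero,
    one_mul, altSum]
  abel

end AlternatingSum

section Factorization

variable {K C : Type*} [Field K] [CommRing C] [Algebra K C]

theorem sum_neg_one_pow_smul_mul_eq_altSum_mul (σ : ℕ → C) (t : C) (k : ℕ) :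
    ∑ j ∈ range (k + 1), ((-1 : K) ^ (k + 1 - j + 1)) • (σ j * t) = altSum σ k * t := by
  rw [altSum, sum_mul]
  refine sum_congr rfl fun j hj => ?_
  rw [Nat.sub_add_comm (Nat.lt_succ_iff.mp (mem_range.mp hj)), pow_succ, pow_succ,
    Algebra.smul_def]
  simp [mul_assoc]

variable (c : ℕ → K) (t : C) (σ : ℕ → C) {m : ℕ}

theorem prod_smul_altSum_eq_prod (hσ0 : σ 0 = 1)
    (hrec : ∀ k, k + 1 ≤ m → c (k + 1) • σ (k + 1) = altSum σ k * t) :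
    ∀ k ≤ m, (∏ l ∈ Icc 1 k, c l) • altSum σ k
      = ∏ j ∈ range k, (t - algebraMap K C (c (j + 1))) := by
  intro k hk
  induction k with
  | zero => simp [altSum_zero, hσ0]
  | succ k ih =>
    set P := ∏ l ∈ Icc 1 k, c l
    have hPS := ih (Nat.le_of_succ_le hk)
    calc (∏ l ∈ Icc 1 (k + 1), c l) • altSum σ (k + 1)
        = P • (c (k + 1) • σ (k + 1)) - c (k + 1) • (P • altSum σ k) := by
          rw [prod_Icc_succ_top (Nat.le_add_left 1 k), altSum_succ, smul_sub, mul_smul,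
            mul_comm, mul_smul]
      _ = (P • altSum σ k) * t - c (k + 1) • (P • altSum σ k) := by
          rw [hrec k hk, smul_mul_assoc]
      _ = ∏ j ∈ range (k + 1), (t - algebraMap K C (c (j + 1))) := by
          rw [hPS, prod_range_succ, Algebra.smul_def]
          ring

theorem prod_smul_eq_prod_sub (hc0 : c 0 = 0) (hσ0 : σ 0 = 1)
    (hrec : ∀ k, k + 1 ≤ m → c (k + 1) • σ (k + 1) = altSum σ k * t) (k : ℕ) (hk : k + 1 ≤ m) :
    (∏ l ∈ Icc 1 (k + 1), c l) • σ (k + 1) = ∏ j ∈ range (k + 1), (t - algebraMap K C (c j)) := by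
  rw [prod_Icc_succ_top (Nat.le_add_left 1 k), mul_smul, hrec k hk, ← smul_mul_assoc,
    prod_smul_altSum_eq_prod c t σ hσ0 hrec k (Nat.le_of_succ_le hk), prod_range_succ', hc0,
    map_zero, sub_zero]

end Factorization

theorem sigma_factorization_general (K : Type*) [Field K] (q : K) (m : ℕ)
    (C : Type*) [CommRing C] [Algebra K C] (t : C)
    (hqInt : ∀ k : ℕ, 1 ≤ k → k ≤ m → qInt q k ≠ 0)
    (σ : ℕ → C) (hσ0 : σ 0 = 1)
    (hσ : ∀ k : ℕ, 1 ≤ k → k ≤ m →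
      σ k = (qInt q k)⁻¹ • ∑ j ∈ Finset.range k, ((-1 : K) ^ (k - j + 1)) • (σ j * t)) :
    ∀ k : ℕ, 1 ≤ k → k ≤ m →
      (∏ l ∈ Finset.Icc 1 k, qInt q l) • σ k
        = ∏ j ∈ Finset.range k, (t - algebraMap K C (qInt q j)) := by
  have hrec : ∀ k, k + 1 ≤ m → qInt q (k + 1) • σ (k + 1) = altSum σ k * t := by
    intro k hk
    have hk1 : 1 ≤ k + 1 := Nat.le_add_left 1 k
    rw [hσ (k + 1) hk1 hk, smul_inv_smul₀ (hqInt (k + 1) hk1 hk),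
      sum_neg_one_pow_smul_mul_eq_altSum_mul]
  intro k hk1 hkm
  obtain ⟨k, rfl⟩ := Nat.exists_eq_add_of_le' hk1
  exact prod_smul_eq_prod_sub (qInt q) t σ (qInt_zero q) hσ0 hrec k hkm

/-- In a commutative `K`-algebra `C`, for the recursion `σ⁰ = 1`,
`σ^k = (k̂_q)⁻¹·Σ_{j=0}^{k−1} σ^j·(−1)^{k−j+1}·t`, one has the factorization
`(Π_{l=1}^{k} l̂_q)·σ^k = Π_{j=0}^{k−1} (t − ĵ_q·1)` for `1 ≤ k ≤ m`. -/
theorem sigma_factorization (K : Type*) [Field K] (q : K) (hq : q ≠ 0) (m : ℕ)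
    (C : Type*) [CommRing C] [Algebra K C] (t : C)
    (hqInt : ∀ k : ℕ, 1 ≤ k → k ≤ m → qInt q k ≠ 0)
    (σ : ℕ → C) (hσ0 : σ 0 = 1)
    (hσ : ∀ k : ℕ, 1 ≤ k → k ≤ m →
      σ k = (qInt q k)⁻¹ • ∑ j ∈ Finset.range k, ((-1 : K) ^ (k - j + 1)) • (σ j * t)) :
    ∀ k : ℕ, 1 ≤ k → k ≤ m →
      (∏ l ∈ Finset.Icc 1 k, qInt q l) • σ k
        = ∏ j ∈ Finset.range k, (t - algebraMap K C (qInt q j)) :=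
  sigma_factorization_general K q m C t hqInt σ hσ0 hσ
end
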